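/- Let P₁,…,P₈ be eight distinct points of ℙ³(ℂ) in general position (no three collinear, no five on a common hyperplane). Then the complex vector space of homogeneous polynomials of degree 2 in ℂ[x,y,z,w] vanishing at all eight points has dimension at least 2 and at most 3. -/

import Mathlib

open MvPolynomial
open scoped Classical

noncomputable section

/-- The projective line over `ℂ`. -/
abbrev P1C := Projectivization ℂ (Fin 2 → ℂ)
/-- The projective plane over `ℂ`. -/
abbrev P2C := Projectivization ℂ (Fin 3 → ℂ)
/-- Projective 3-space over `ℂ`. -/
abbrev P3C := Projectivization ℂ (Fin 4 → ℂ)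

/-- The quadratic form `δ = z² − 4xy` defining the conic `Δ`. -/
def δpoly : MvPolynomial (Fin 3) ℂ := X 2 ^ 2 - 4 * X 0 * X 1

/-- `P` is a singular point of the plane curve `{γ = 0}`. -/
def SingAt (γ : MvPolynomial (Fin 3) ℂ) (P : P2C) : Prop :=
  eval P.rep γ = 0 ∧ ∀ i : Fin 3, eval P.rep (pderiv i γ) = 0

/-- `P` is a node of the plane curve `{γ = 0}`. -/
def NodeAt (γ : MvPolynomial (Fin 3) ℂ) (P : P2C) : Prop :=
  SingAt γ P ∧
    (Matrix.of fun i j : Fin 3 => eval P.rep (pderiv i (pderiv j γ))).rank = 2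

/-- `{γ = 0}` is a nodal plane curve. -/
def NodalCurve (γ : MvPolynomial (Fin 3) ℂ) : Prop :=
  Squarefree γ ∧ ∀ P : P2C, SingAt γ P → NodeAt γ P

/-- Restriction of a ternary form to the conic `Δ`, via `(s:t) ↦ (s² : t² : 2st)`. -/
def restrictΔ (f : MvPolynomial (Fin 3) ℂ) : MvPolynomial (Fin 2) ℂ :=
  aeval (fun j => (![X 0 ^ 2, X 1 ^ 2, 2 * X 0 * X 1] : Fin 3 → MvPolynomial (Fin 2) ℂ) j) f

/-- `Δ` is a simple contact conic of the degree-`d` curve `{γ = 0}`. -/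
def SimpleContact (γ : MvPolynomial (Fin 3) ℂ) (d : ℕ) : Prop :=
  (∀ P : P2C, eval P.rep γ = 0 → eval P.rep δpoly = 0 → ¬ SingAt γ P) ∧
  ∃ (c : ℂ) (h : MvPolynomial (Fin 2) ℂ),
    c ≠ 0 ∧ Squarefree h ∧ h.IsHomogeneous d ∧ restrictΔ γ = C c * h ^ 2

/-- The covering map `ℙ¹×ℙ¹ → ℙ²` on representatives. -/
def πvec (a b : Fin 2 → ℂ) : Fin 3 → ℂ := ![a 0 * b 0, a 1 * b 1, a 0 * b 1 + a 1 * b 0]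

lemma vec2_eq_zero {x : Fin 2 → ℂ} (h0 : x 0 = 0) (h1 : x 1 = 0) : x = 0 := by
  ext i
  fin_cases i
  · simpa using h0
  · simpa using h1

lemma πvec_ne_zero {a b : Fin 2 → ℂ} (ha : a ≠ 0) (hb : b ≠ 0) : πvec a b ≠ 0 := by
  intro h
  have h0 : a 0 * b 0 = 0 := by simpa [πvec] using congrFun h 0
  have h1 : a 1 * b 1 = 0 := by simpa [πvec] using congrFun h 1
  have h2 : a 0 * b 1 + a 1 * b 0 = 0 := by simpa [πvec] using congrFun h 2
  by_cases ha0 : a 0 = 0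
  · have ha1 : a 1 ≠ 0 := fun h' => ha (vec2_eq_zero ha0 h')
    have hb1 : b 1 = 0 := by
      rcases mul_eq_zero.mp h1 with h' | h'
      · exact absurd h' ha1
      · exact h'
    have hb0 : b 0 = 0 := by
      have hz : a 1 * b 0 = 0 := by simpa [ha0, hb1] using h2
      rcases mul_eq_zero.mp hz with h' | h'
      · exact absurd h' ha1
      · exact h'
    exact hb (vec2_eq_zero hb0 hb1)
  · have hb0 : b 0 = 0 := by
      rcases mul_eq_zero.mp h0 with h' | h'
      · exact absurd h' ha0
      · exact h'
    have hb1 : b 1 = 0 := by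
      have hz : a 0 * b 1 = 0 := by simpa [hb0] using h2
      rcases mul_eq_zero.mp hz with h' | h'
      · exact absurd h' ha0
      · exact h'
    exact hb (vec2_eq_zero hb0 hb1)

/-- The double cover `π : ℙ¹×ℙ¹ → ℙ²` branched along `Δ`,
`π((s:t),(u:v)) = (su : tv : sv + tu)`. -/
def πΔ (Q : P1C × P1C) : P2C :=
  Projectivization.mk ℂ (πvec Q.1.rep Q.2.rep)
    (πvec_ne_zero Q.1.rep_nonzero Q.2.rep_nonzero)

/-- The weights giving the bigrading on `ℂ[s,t,u,v]`. -/
def biwt : Fin 4 → ℕ × ℕ := ![(1,0),(1,0),(0,1),(0,1)]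

/-- `p ∈ ℂ[s,t,u,v]` is bihomogeneous of bidegree `(a,b)`. -/
def Bihom (p : MvPolynomial (Fin 4) ℂ) (a b : ℕ) : Prop :=
  IsWeightedHomogeneous biwt p (a, b)

/-- The permutation of the variables `s,t,u,v` realizing the swap `(s,t) ↔ (u,v)`. -/
def swapPerm : Equiv.Perm (Fin 4) := (Equiv.swap 0 2).trans (Equiv.swap 1 3)

/-- `p(u,v,s,t)`, the polynomial `p` composed with the covering involution. -/
def swapPoly (p : MvPolynomial (Fin 4) ℂ) : MvPolynomial (Fin 4) ℂ :=
  rename swapPerm p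

/-- `γ(su, tv, sv + tu)`, the pull-back of a ternary form under `π`. -/
def pullΔ (γ : MvPolynomial (Fin 3) ℂ) : MvPolynomial (Fin 4) ℂ :=
  aeval (fun j => (![X 0 * X 2, X 1 * X 3, X 0 * X 3 + X 1 * X 2] :
    Fin 3 → MvPolynomial (Fin 4) ℂ) j) γ

/-- `γ` splits with type `(m,n)` with respect to `Δ`. -/
def SplitsType (γ : MvPolynomial (Fin 3) ℂ) (m n : ℕ) : Prop :=
  ∃ dp : MvPolynomial (Fin 4) ℂ,
    dp ≠ 0 ∧ Bihom dp m n ∧ pullΔ γ = dp * swapPoly dp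

/-- `{l = 0}` is a line tangent to `Δ`:
up to a nonzero scalar, `l = b²x + a²y − ab·z` with `(a,b) ≠ (0,0)`. -/
def TangentToΔ (l : MvPolynomial (Fin 3) ℂ) : Prop :=
  ∃ c a b : ℂ, c ≠ 0 ∧ (a ≠ 0 ∨ b ≠ 0) ∧
    l = C c * (C (b ^ 2) * X 0 + C (a ^ 2) * X 1 - C (a * b) * X 2)

/-- The line `{l = 0}` is transversal to `{γ = 0}`: for a linear parameterization
of the line, the restricted binary form is squarefree. -/
def TransversalTo (γ l : MvPolynomial (Fin 3) ℂ) : Prop :=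
  ∃ p q : Fin 3 → ℂ, LinearIndependent ℂ ![p, q] ∧ eval p l = 0 ∧ eval q l = 0 ∧
    Squarefree (aeval (fun j => (fun j => C (p j) * X 0 + C (q j) * X 1 :
      Fin 3 → MvPolynomial (Fin 2) ℂ) j) γ)

/-- The representative in `ℂ⁴` of a point of `ℙ¹×ℙ¹`. -/
def pairRep (Q : P1C × P1C) : Fin 4 → ℂ :=
  ![Q.1.rep 0, Q.1.rep 1, Q.2.rep 0, Q.2.rep 1]

/-- Evaluation of `p ∈ ℂ[s,t,u,v]` at (a representative of) a point of `ℙ¹×ℙ¹`. -/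
def evalPair (p : MvPolynomial (Fin 4) ℂ) (Q : P1C × P1C) : ℂ := eval (pairRep Q) p

/-- `Z = {Q ∈ ℙ¹×ℙ¹ : d⁺(Q) = 0 and d⁺(σ(Q)) = 0}`. -/
def Zset (dp : MvPolynomial (Fin 4) ℂ) : Set (P1C × P1C) :=
  {Q | evalPair dp Q = 0 ∧ evalPair dp Q.swap = 0}

/-- Evaluation at a vector, as a linear map. -/
def evalLin {k : ℕ} (v : Fin k → ℂ) : MvPolynomial (Fin k) ℂ →ₗ[ℂ] ℂ :=
  (aeval v).toLinearMap

/-- The space of degree-`d` forms in `k` variables vanishing on a set `S` of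
projective points. -/
def homVanish (k d : ℕ) (S : Set (Projectivization ℂ (Fin k → ℂ))) :
    Submodule ℂ (MvPolynomial (Fin k) ℂ) :=
  homogeneousSubmodule (Fin k) ℂ d ⊓ ⨅ P ∈ S, LinearMap.ker (evalLin P.rep)

/-- The space of bidegree-`(a,b)` forms vanishing on a set `S ⊆ ℙ¹×ℙ¹`. -/
def biVanish (a b : ℕ) (S : Set (P1C × P1C)) : Submodule ℂ (MvPolynomial (Fin 4) ℂ) :=
  weightedHomogeneousSubmodule ℂ biwt (a, b) ⊓ ⨅ Q ∈ S, LinearMap.ker (evalLin (pairRep Q))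

/-- `r` points of `ℙ¹×ℙ¹` are in general position. -/
def GenPosP1P1 {r : ℕ} (P : Fin r → P1C × P1C) : Prop :=
  Function.Injective P ∧
  (∀ Q : P1C, {i : Fin r | (P i).1 = Q}.ncard ≤ 2) ∧
  (∀ Q : P1C, {i : Fin r | (P i).2 = Q}.ncard ≤ 2) ∧
  ∀ p : MvPolynomial (Fin 4) ℂ, p ≠ 0 → Bihom p 1 1 →
    ∀ S : Finset (Fin r), S.card = 5 → ¬ ∀ i ∈ S, evalPair p (P i) = 0

/-- `P` is a singular point of the surface `{F = 0} ⊆ ℙ³`. -/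
def SingAt4 (F : MvPolynomial (Fin 4) ℂ) (P : P3C) : Prop :=
  eval P.rep F = 0 ∧ ∀ i : Fin 4, eval P.rep (pderiv i F) = 0

/-- `P` is a node of the surface `{F = 0} ⊆ ℙ³`. -/
def NodeAt4 (F : MvPolynomial (Fin 4) ℂ) (P : P3C) : Prop :=
  SingAt4 F P ∧
    (Matrix.of fun i j : Fin 4 => eval P.rep (pderiv i (pderiv j F))).rank = 3

/-- `{F = 0}` is a nodal quartic surface in `ℙ³`. -/
def NodalQuartic (F : MvPolynomial (Fin 4) ℂ) : Prop :=
  F.IsHomogeneous 4 ∧ Squarefree F ∧ ∀ P : P3C, SingAt4 F P → NodeAt4 F P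

/-- `r` points of `ℙ³` are in general position: no three collinear, no five on a
common hyperplane. -/
def GenPosP3 {r : ℕ} (P : Fin r → P3C) : Prop :=
  Function.Injective P ∧
  (∀ i j k : Fin r, i ≠ j → i ≠ k → j ≠ k →
    LinearIndependent ℂ ![(P i).rep, (P j).rep, (P k).rep]) ∧
  ∀ φ : (Fin 4 → ℂ) →ₗ[ℂ] ℂ, φ ≠ 0 →
    ∀ S : Finset (Fin r), S.card = 5 → ¬ ∀ i ∈ S, φ (P i).rep = 0

/-- The inclusion `ℂ[x,y,z] → ℂ[x,y,z,w]`. -/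
def liftP (f : MvPolynomial (Fin 3) ℂ) : MvPolynomial (Fin 4) ℂ :=
  rename Fin.castSucc f

lemma e3_ne_zero : (![0,0,0,1] : Fin 4 → ℂ) ≠ 0 := by
  intro h
  simpa using congrFun h 3

/-- The point `P₀ = (0:0:0:1) ∈ ℙ³`. -/
def P0 : P3C := Projectivization.mk ℂ ![0,0,0,1] e3_ne_zero

/-- The surface `{F = 0}` contains no projective line through `P`. -/
def NoLineThrough (F : MvPolynomial (Fin 4) ℂ) (P : P3C) : Prop :=
  ¬ ∃ v : Fin 4 → ℂ, LinearIndependent ℂ ![P.rep, v] ∧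
      ∀ a b : ℂ, eval (a • P.rep + b • v) F = 0

/-- Forget the last coordinate of (a representative of) a point of `ℙ³`. -/
def dropW (Q : P3C) : Fin 3 → ℂ := fun j => Q.rep j.castSucc

lemma e100_ne_zero : (![1,0,0] : Fin 3 → ℂ) ≠ 0 := by
  intro h
  simpa using congrFun h 0

/-- The projection `ℙ³ ∖ {(0:0:0:1)} → ℙ²`, `(x:y:z:w) ↦ (x:y:z)`
(with junk value at `(0:0:0:1)`). -/
def projP0 (Q : P3C) : P2C :=
  if h : dropW Q ≠ 0 then Projectivization.mk ℂ (dropW Q) h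
  else Projectivization.mk ℂ ![1,0,0] e100_ne_zero

end

/-! The eight points impose at most 8 linear conditions on the 10-dimensional space of quadrics,
which leaves at least 2 dimensions. For the upper bound, seven of the points already impose
independent conditions: given one of them, split the other six into two triples such that neither
triple spans a plane through it; the product of the two planes is a quadric through the six but
not through the seventh. Such a split exists because two planes through the chosen point sharing
two of the six would coincide and contain five of the points. -/

open Module Submodule

namespace MvPolynomial

theorem finrank_homogeneousSubmodule {σ R : Type*} [Fintype σ] [CommRing R] [Nontrivial R]
    (n : ℕ) : finrank R (homogeneousSubmodule σ R n) = (Fintype.card σ).multichoose n := by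
  have hsupp : {d : σ →₀ ℕ | d.degree = n} = ↑((Finset.univ : Finset σ).finsuppAntidiag n) := by
    ext d
    simp [Finset.mem_finsuppAntidiag, Finsupp.degree_eq_sum]
  rw [homogeneousSubmodule_eq_finsupp_supported, hsupp]
  exact (finrank_eq_card_basis (basisRestrictSupport R _)).trans
    (by simp [Finset.card_finsuppAntidiag_nat_eq_multichoose])

instance {σ R : Type*} [Finite σ] [CommRing R] (n : ℕ) :
    Module.Finite R (homogeneousSubmodule σ R n) :=
  Module.Finite.iff_fg.mpr (homogeneousSubmodule_fg σ R n)

end MvPolynomial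

section LinearForms

variable {K σ : Type*} [Field K] [Fintype σ]

theorem eval_toMvPolynomial_dual (φ : Dual K (σ → K)) (v : σ → K) :
    eval v (φ.toMvPolynomial (Pi.basisFun K σ) (Basis.singleton Unit K) ()) = φ v := by
  have hrepr : (Pi.basisFun K σ).repr.symm (Finsupp.equivFunOnFinite.symm v) = v :=
    (Pi.basisFun K σ).repr.symm_apply_eq.mpr (by ext; simp)
  have h := φ.toMvPolynomial_eval_eq_apply (Pi.basisFun K σ) (Basis.singleton Unit K) ()
    (Finsupp.equivFunOnFinite.symm v)
  rwa [hrepr, Basis.singleton_repr, Finsupp.coe_equivFunOnFinite_symm] at h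

theorem exists_isHomogeneous_one_of_notMem_span {S : Set (σ → K)} {x : σ → K}
    (hx : x ∉ span K S) :
    ∃ q : MvPolynomial σ K, q.IsHomogeneous 1 ∧ eval x q ≠ 0 ∧ ∀ y ∈ S, eval y q = 0 := by
  obtain ⟨φ, hφx, hφS⟩ := exists_dual_map_eq_bot_of_notMem hx inferInstance
  refine ⟨φ.toMvPolynomial (Pi.basisFun K σ) (Basis.singleton Unit K) (),
    φ.toMvPolynomial_isHomogeneous _ _ _, ?_, fun y hy => ?_⟩
  · rwa [eval_toMvPolynomial_dual]
  · rw [eval_toMvPolynomial_dual]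
    exact LinearMap.le_ker_iff_map.mpr hφS (subset_span hy)

theorem exists_isHomogeneous_two_of_notMem_span {S T : Set (σ → K)} {x : σ → K}
    (hS : x ∉ span K S) (hT : x ∉ span K T) :
    ∃ q : MvPolynomial σ K, q.IsHomogeneous 2 ∧ eval x q ≠ 0 ∧ ∀ y ∈ S ∪ T, eval y q = 0 := by
  obtain ⟨f, hf, hfx, hfS⟩ := exists_isHomogeneous_one_of_notMem_span hS
  obtain ⟨g, hg, hgx, hgT⟩ := exists_isHomogeneous_one_of_notMem_span hT
  refine ⟨f * g, hf.mul hg, by simpa using mul_ne_zero hfx hgx, ?_⟩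
  rintro y (hy | hy) <;> simp [hfS y, hgT y, hy]

end LinearForms

section VanishingConditions

variable {K M ι : Type*} [Field K] [AddCommGroup M] [Module K M]
  (V : Submodule K M) (f : ι → Dual K M)

theorem finrank_inf_iInf_ker_eq_finrank_ker :
    finrank K ↥(V ⊓ ⨅ i, LinearMap.ker (f i)) =
      finrank K (LinearMap.ker (LinearMap.pi fun i => f i ∘ₗ V.subtype)) := by
  have hcomap : comap V.subtype (V ⊓ ⨅ i, LinearMap.ker (f i)) =
      LinearMap.ker (LinearMap.pi fun i => f i ∘ₗ V.subtype) := by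
    ext v
    simp [funext_iff]
  rw [← (comapSubtypeEquivOfLe (inf_le_left : V ⊓ ⨅ i, LinearMap.ker (f i) ≤ V)).finrank_eq,
    hcomap]

theorem finrank_sub_card_le_finrank_inf_iInf_ker [Fintype ι] [FiniteDimensional K V] :
    finrank K V - Fintype.card ι ≤ finrank K ↥(V ⊓ ⨅ i, LinearMap.ker (f i)) := by
  rw [finrank_inf_iInf_ker_eq_finrank_ker]
  have hrank := (LinearMap.pi fun i => f i ∘ₗ V.subtype).finrank_range_add_finrank_ker
  have hrange := (LinearMap.range (LinearMap.pi fun i => f i ∘ₗ V.subtype)).finrank_le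
  rw [finrank_fintype_fun_eq_card] at hrange
  omega

theorem finrank_inf_iInf_ker_of_separates [Fintype ι] [FiniteDimensional K V]
    (hsep : ∀ i, ∃ v ∈ V, f i v ≠ 0 ∧ ∀ j ≠ i, f j v = 0) :
    finrank K ↥(V ⊓ ⨅ i, LinearMap.ker (f i)) = finrank K V - Fintype.card ι := by
  rw [finrank_inf_iInf_ker_eq_finrank_ker]
  set Φ := LinearMap.pi fun i => f i ∘ₗ V.subtype
  have hsurj : LinearMap.range Φ = ⊤ := by
    rw [← top_le_iff, ← (Pi.basisFun K ι).span_eq, span_le]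
    rintro _ ⟨i, rfl⟩
    obtain ⟨v, hv, hvi, hvj⟩ := hsep i
    have hΦv : Φ ⟨v, hv⟩ = f i v • Pi.basisFun K ι i := by
      ext j
      by_cases hji : j = i
      · simp [Φ, hji]
      · simp [Φ, hji, hvj j hji]
    refine ⟨(f i v)⁻¹ • ⟨v, hv⟩, ?_⟩
    rw [map_smul, hΦv, smul_smul, inv_mul_cancel₀ hvi, one_smul]
  rw [← Φ.finrank_range_add_finrank_ker, hsurj,
    finrank_top, finrank_fintype_fun_eq_card]
  omega

end VanishingConditions

namespace GenPosP3

variable {r : ℕ} {P : Fin r → P3C}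

theorem comp_embedding {s : ℕ} (hP : GenPosP3 P) (e : Fin s ↪ Fin r) : GenPosP3 (P ∘ e) := by
  refine ⟨hP.1.comp e.injective, fun i j k hij hik hjk => ?_, fun φ hφ S hS hvan => ?_⟩
  · exact hP.2.1 (e i) (e j) (e k) (e.injective.ne hij) (e.injective.ne hik) (e.injective.ne hjk)
  · exact hP.2.2 φ hφ (S.map e) (by rw [Finset.card_map, hS]) (by simpa using hvan)

theorem span_image_eq_top (hP : GenPosP3 P) {S : Finset (Fin r)} (hS : S.card = 5) :
    span ℂ ((fun j => (P j).rep) '' S) = ⊤ := by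
  by_contra hne
  obtain ⟨φ, hφ, hφS⟩ := exists_dual_map_eq_bot_of_lt_top (lt_top_iff_ne_top.mpr hne) inferInstance
  exact hP.2.2 φ hφ S hS fun j hj =>
    LinearMap.le_ker_iff_map.mpr hφS (subset_span ⟨j, hj, rfl⟩)

theorem finrank_span_image (hP : GenPosP3 P) {S : Finset (Fin r)} (hS : S.card = 3) :
    finrank ℂ (span ℂ ((fun j => (P j).rep) '' S)) = 3 := by
  obtain ⟨a, b, c, hab, hac, hbc, rfl⟩ := Finset.card_eq_three.mp hS
  have hrange : (fun j => (P j).rep) '' ↑({a, b, c} : Finset (Fin r)) =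
      Set.range ![(P a).rep, (P b).rep, (P c).rep] := by
    simp only [Finset.coe_insert, Finset.coe_singleton, Set.image_insert_eq, Set.image_singleton,
      Matrix.range_cons, Matrix.range_empty, Set.singleton_union, Set.union_empty]
  rw [hrange, finrank_span_eq_card (hP.2.1 a b c hab hac hbc), Fintype.card_fin]

theorem notMem_span_of_mem_span (hP : GenPosP3 P) {i : Fin r} {A B : Finset (Fin r)}
    (hA : A.card = 3) (hB : B.card = 3) (hAB : (A ∩ B).card = 2) (hi : i ∉ A ∪ B)
    (hiA : (P i).rep ∈ span ℂ ((fun j => (P j).rep) '' A)) :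
    (P i).rep ∉ span ℂ ((fun j => (P j).rep) '' B) := by
  intro hiB
  set v := fun j => (P j).rep
  set W := span ℂ (v '' ↑(insert i (A ∩ B)))
  have hW : finrank ℂ W = 3 := by
    refine hP.finrank_span_image ?_
    rw [Finset.card_insert_of_notMem (fun h => hi (Finset.inter_subset_union h)), hAB]
  have hplane : ∀ C : Finset (Fin r), C.card = 3 → A ∩ B ⊆ C → v i ∈ span ℂ (v '' C) →
      span ℂ (v '' C) = W := by
    intro C hC hsub hiC
    refine (eq_of_le_of_finrank_le (span_le.mpr ?_) ?_).symm
    · rintro _ ⟨j, hj, rfl⟩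
      rcases Finset.mem_insert.mp hj with rfl | hj
      · exact hiC
      · exact subset_span ⟨j, hsub hj, rfl⟩
    · rw [hW, ← Finset.coe_image]
      exact (finrank_span_finset_le_card _).trans (Finset.card_image_le.trans hC.le)
  have hWA := hplane A hA Finset.inter_subset_left hiA
  have hWB := hplane B hB Finset.inter_subset_right hiB
  have htop : span ℂ (v '' ↑(insert i (A ∪ B))) = ⊤ := by
    refine hP.span_image_eq_top ?_
    have := Finset.card_union_add_card_inter A B
    rw [Finset.card_insert_of_notMem hi]
    omega
  have hle : span ℂ (v '' ↑(insert i (A ∪ B))) ≤ W := by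
    refine span_le.mpr ?_
    rintro _ ⟨j, hj, rfl⟩
    rcases Finset.mem_insert.mp hj with rfl | hj
    · exact subset_span ⟨j, Finset.mem_insert_self _ _, rfl⟩
    · rcases Finset.mem_union.mp hj with hj | hj
      · exact hWA ▸ subset_span ⟨j, hj, rfl⟩
      · exact hWB ▸ subset_span ⟨j, hj, rfl⟩
  have := Submodule.finrank_mono (htop ▸ hle)
  rw [finrank_top, finrank_fin_fun, hW] at this
  omega

theorem exists_quadric_separating_zero {P : Fin 7 → P3C} (hP : GenPosP3 P) :
    ∃ q : MvPolynomial (Fin 4) ℂ, q.IsHomogeneous 2 ∧ eval (P 0).rep q ≠ 0 ∧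
      ∀ j ≠ 0, eval (P j).rep q = 0 := by
  set v := fun j => (P j).rep
  obtain ⟨A, B, hAB, hA, hB⟩ : ∃ A B : Finset (Fin 7), A ∪ B = Finset.univ.erase 0 ∧
      v 0 ∉ span ℂ (v '' A) ∧ v 0 ∉ span ℂ (v '' B) := by
    by_contra! h
    -- any choice of one triple from each of these three splits contains two triples
    -- sharing two points
    have h₁ := or_iff_not_imp_left.mpr (h {1, 2, 3} {4, 5, 6} (by decide))
    have h₂ := or_iff_not_imp_left.mpr (h {1, 4, 5} {2, 3, 6} (by decide))
    have h₃ := or_iff_not_imp_left.mpr (h {1, 2, 6} {3, 4, 5} (by decide))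
    rcases h₁ with h₁ | h₁ <;> rcases h₂ with h₂ | h₂ <;> rcases h₃ with h₃ | h₃ <;>
      first
      | exact hP.notMem_span_of_mem_span (by decide) (by decide) (by decide) (by decide) h₁ h₂
      | exact hP.notMem_span_of_mem_span (by decide) (by decide) (by decide) (by decide) h₁ h₃
      | exact hP.notMem_span_of_mem_span (by decide) (by decide) (by decide) (by decide) h₂ h₃
  obtain ⟨q, hq, hq0, hqAB⟩ := exists_isHomogeneous_two_of_notMem_span hA hB
  refine ⟨q, hq, hq0, fun j hj => hqAB _ ?_⟩
  rw [← Set.image_union, ← Finset.coe_union, hAB]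
  exact ⟨j, by simpa using hj, rfl⟩

theorem exists_quadric_separating {P : Fin 7 → P3C} (hP : GenPosP3 P) (i : Fin 7) :
    ∃ q : MvPolynomial (Fin 4) ℂ, q.IsHomogeneous 2 ∧ eval (P i).rep q ≠ 0 ∧
      ∀ j ≠ i, eval (P j).rep q = 0 := by
  obtain ⟨q, hq, hqi, hqj⟩ :=
    (hP.comp_embedding (Equiv.swap 0 i).toEmbedding).exists_quadric_separating_zero
  refine ⟨q, hq, by simpa using hqi, fun j hj => ?_⟩
  simpa using hqj (Equiv.swap 0 i j) (by simpa [Equiv.swap_apply_eq_iff] using hj)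

end GenPosP3

theorem evalLin_apply {k : ℕ} (v : Fin k → ℂ) (p : MvPolynomial (Fin k) ℂ) :
    evalLin v p = eval v p :=
  DFunLike.congr_fun (coe_aeval_eq_eval v) p

theorem homVanish_range {k d : ℕ} {ι : Type*} (P : ι → Projectivization ℂ (Fin k → ℂ)) :
    homVanish k d (Set.range P) =
      homogeneousSubmodule (Fin k) ℂ d ⊓ ⨅ i, LinearMap.ker (evalLin (P i).rep) := by
  rw [homVanish, iInf_range]

theorem dim_quadrics_through_eight_points (P : Fin 8 → P3C) (hgen : GenPosP3 P) :
    2 ≤ Module.finrank ℂ ↥(homVanish 4 2 (Set.range P)) ∧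
    Module.finrank ℂ ↥(homVanish 4 2 (Set.range P)) ≤ 3 := by
  set V := homogeneousSubmodule (Fin 4) ℂ 2
  have hV : finrank ℂ V = 10 := by
    simp [V, finrank_homogeneousSubmodule, Nat.multichoose_eq, Nat.choose]
  have hsep : ∀ i : Fin 7, ∃ q ∈ V, evalLin (P i.castSucc).rep q ≠ 0 ∧
      ∀ j ≠ i, evalLin (P j.castSucc).rep q = 0 := by
    intro i
    obtain ⟨q, hq, hqi, hqj⟩ := (hgen.comp_embedding Fin.castSuccEmb).exists_quadric_separating i
    exact ⟨q, hq, by simpa [evalLin_apply] using hqi,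
      fun j hj => by simpa [evalLin_apply] using hqj j hj⟩
  rw [homVanish_range]
  constructor
  · simpa [hV] using finrank_sub_card_le_finrank_inf_iInf_ker V fun i => evalLin (P i).rep
  · calc finrank ℂ ↥(V ⊓ ⨅ i, LinearMap.ker (evalLin (P i).rep))
        ≤ finrank ℂ ↥(V ⊓ ⨅ i : Fin 7, LinearMap.ker (evalLin (P i.castSucc).rep)) :=
          Submodule.finrank_mono (inf_le_inf_left _ (le_iInf fun i => iInf_le _ i.castSucc))
      _ = 3 := by rw [finrank_inf_iInf_ker_of_separates V _ hsep, hV, Fintype.card_fin]
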